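/- arXiv:2312.13609 — 5 statements merged into one kernel-verified Lean document; each statement's English description precedes it below -/
import Mathlib

section
/- Let K(a_{n,k}) and K(b_{n,k}) be nuclear Köthe spaces, and S: ℕ → ℕ a non-decreasing function. A family 𝒜 of continuous linear operators from K(a_{n,k}) to K(b_{n,k}) is S-tame if and only if for every T ∈ 𝒜 there exist k₀ ∈ ℕ and C > 0 such that ‖T e_n‖_k ≤ C ‖e_n‖_{S(k)} for all n ∈ ℕ and all k ≥ k₀. -/
open scoped BigOperators
noncomputable section

/-- A Köthe matrix: non-negative entries, each row eventually positive,
rows non-decreasing in the second index. -/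
structure IsKotheMatrix (a : ℕ → ℕ → ℝ) : Prop where
  nonneg : ∀ n k, 0 ≤ a n k
  pos : ∀ n, ∃ k, 0 < a n k
  mono : ∀ n k, a n k ≤ a n (k + 1)

/-- Membership in the Köthe space `K(a)`. -/
def InKothe (a : ℕ → ℕ → ℝ) (x : ℕ → ℝ) : Prop :=
  ∀ k, Summable fun n => |x n| * a n k

/-- The `k`-th seminorm of the Köthe space `K(a)`. -/
def kNorm (a : ℕ → ℕ → ℝ) (k : ℕ) (x : ℕ → ℝ) : ℝ :=
  ∑' n, |x n| * a n k

/-- Grothendieck–Pietsch nuclearity criterion for a Köthe space. -/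
def IsNuclearKothe (a : ℕ → ℕ → ℝ) : Prop :=
  ∀ k, ∃ l, k < l ∧ Summable fun n => a n k / a n l

/-- The `n`-th unit vector. -/
def unitVec (n : ℕ) : ℕ → ℝ := fun j => if j = n then 1 else 0

/-- Weight of the finite type power series space `Λ₁(β)`. -/
def finW (β : ℕ → ℝ) (k : ℕ) (n : ℕ) : ℝ := Real.exp (-(β n) / (k : ℝ))

/-- Weight of the infinite type power series space `Λ_∞(β)`. -/
def infW (β : ℕ → ℝ) (k : ℕ) (n : ℕ) : ℝ := Real.exp ((k : ℝ) * β n)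

/-- The `k`-th seminorm of `Λ₁(β)` (for `0 < k`). -/
def finNorm (β : ℕ → ℝ) (k : ℕ) (x : ℕ → ℝ) : ℝ := ∑' n, |x n| * finW β k n

/-- The `k`-th seminorm of `Λ_∞(β)`. -/
def infNorm (β : ℕ → ℝ) (k : ℕ) (x : ℕ → ℝ) : ℝ := ∑' n, |x n| * infW β k n

/-- Membership in `Λ₁(β)`. -/
def memFin (β : ℕ → ℝ) (x : ℕ → ℝ) : Prop :=
  ∀ k : ℕ, 0 < k → Summable fun n => |x n| * finW β k n

/-- Membership in `Λ_∞(β)`. -/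
def memInf (β : ℕ → ℝ) (x : ℕ → ℝ) : Prop :=
  ∀ k : ℕ, 0 < k → Summable fun n => |x n| * infW β k n

/-- Lower triangular Toeplitz operator `T̂_θ`, `T̂_θ e_n = ∑_{j ≥ n} θ_{j-n} e_j`. -/
def hatT (θ : ℕ → ℝ) (x : ℕ → ℝ) : ℕ → ℝ :=
  fun j => ∑ i ∈ Finset.range (j + 1), θ (j - i) * x i

/-- Upper triangular Toeplitz operator `Ť_θ`, `Ť_θ e_n = ∑_{j ≤ n} θ_{n-j} e_j`. -/
def checkT (θ : ℕ → ℝ) (x : ℕ → ℝ) : ℕ → ℝ :=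
  fun j => ∑' i, θ i * x (j + i)

/-- Operator defined by a matrix acting on sequences. -/
def matOp (t : ℕ → ℕ → ℝ) (x : ℕ → ℝ) : ℕ → ℝ :=
  fun j => ∑' n, t j n * x n

/-- The growth condition (3.5): `β_s ≤ M (β_{s-t} + β_t)` for all `s > t`. -/
def GrowthCond (β : ℕ → ℝ) (M : ℕ) : Prop :=
  ∀ t s : ℕ, t < s → β s ≤ (M : ℝ) * (β (s - t) + β t)

lemma unitVec_inKothe (a : ℕ → ℕ → ℝ) (n : ℕ) : InKothe a (unitVec n) := by
  intro k
  apply summable_of_ne_finset_zero (s := {n})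
  intro j hj
  simp only [Finset.mem_singleton] at hj
  simp [unitVec, hj]

lemma kNorm_unitVec (a : ℕ → ℕ → ℝ) (k n : ℕ) :
    kNorm a k (unitVec n) = a n k := by
  unfold kNorm
  rw [tsum_eq_single n]
  · simp [unitVec]
  · intro j hj; simp [unitVec, hj]

lemma kNorm_nonneg (a : ℕ → ℕ → ℝ) (hnn : ∀ n k, 0 ≤ a n k) (k : ℕ) (x : ℕ → ℝ) :
    0 ≤ kNorm a k x :=
  tsum_nonneg fun n => mul_nonneg (abs_nonneg _) (hnn n k)

lemma kNorm_add_le (a : ℕ → ℕ → ℝ) (hnn : ∀ n k, 0 ≤ a n k) (k : ℕ) (u v : ℕ → ℝ)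
    (hu : Summable fun n => |u n| * a n k) (hv : Summable fun n => |v n| * a n k) :
    kNorm a k (u + v) ≤ kNorm a k u + kNorm a k v := by
  have hle : ∀ n, |(u + v) n| * a n k ≤ |u n| * a n k + |v n| * a n k := by
    intro n
    rw [← add_mul]
    exact mul_le_mul_of_nonneg_right (abs_add_le _ _) (hnn n k)
  have hsum : Summable fun n => |u n| * a n k + |v n| * a n k := hu.add hv
  calc kNorm a k (u + v)
      ≤ ∑' n, (|u n| * a n k + |v n| * a n k) := by
        refine Summable.tsum_le_tsum hle ?_ hsum
        exact hsum.of_nonneg_of_le (fun n => mul_nonneg (abs_nonneg _) (hnn n k)) hle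
    _ = kNorm a k u + kNorm a k v := Summable.tsum_add hu hv

lemma kNorm_smul (a : ℕ → ℕ → ℝ) (k : ℕ) (c : ℝ) (u : ℕ → ℝ) :
    kNorm a k (c • u) = |c| * kNorm a k u := by
  unfold kNorm
  rw [← tsum_mul_left]
  congr 1; funext n
  simp [abs_mul, mul_assoc]

lemma kNorm_sum (a : ℕ → ℕ → ℝ) (hnn : ∀ n k, 0 ≤ a n k) (k : ℕ)
    (s : Finset ℕ) (f : ℕ → (ℕ → ℝ))
    (hf : ∀ i ∈ s, Summable fun n => |f i n| * a n k) :
    (Summable fun n => |(∑ i ∈ s, f i) n| * a n k) ∧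
      kNorm a k (∑ i ∈ s, f i) ≤ ∑ i ∈ s, kNorm a k (f i) := by
  classical
  induction s using Finset.induction with
  | empty =>
      constructor
      · simpa using summable_zero
      · simp [kNorm]
  | @insert i s hi ih =>
      have hfi : Summable fun n => |f i n| * a n k := hf i (Finset.mem_insert_self i s)
      have ihs := ih (fun j hj => hf j (Finset.mem_insert_of_mem hj))
      rw [Finset.sum_insert hi, Finset.sum_insert hi]
      constructor
      · refine Summable.of_nonneg_of_le
          (fun n => mul_nonneg (abs_nonneg _) (hnn n k)) ?_ (hfi.add ihs.1)
        intro n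
        rw [← add_mul]
        exact mul_le_mul_of_nonneg_right (abs_add_le _ _) (hnn n k)
      · calc kNorm a k (f i + ∑ j ∈ s, f j)
            ≤ kNorm a k (f i) + kNorm a k (∑ j ∈ s, f j) :=
              kNorm_add_le a hnn k _ _ hfi ihs.1
          _ ≤ kNorm a k (f i) + ∑ j ∈ s, kNorm a k (f j) := by linarith [ihs.2]

lemma tail_tendsto (f : ℕ → ℝ) (hf : Summable f) (hnn : ∀ n, 0 ≤ f n) :
    Filter.Tendsto (fun N => ∑' n, if n < N then 0 else f n)
      Filter.atTop (nhds 0) := by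
  have key : ∀ N, (∑' n, if n < N then 0 else f n)
      = (∑' n, f n) - ∑ n ∈ Finset.range N, f n := by
    intro N
    have hite : Summable fun n => if n < N then f n else 0 :=
      summable_of_ne_finset_zero (s := Finset.range N)
        (fun n hn => by simp [Finset.mem_range] at hn; simp [hn])
    have heq : ∀ n, (if n < N then 0 else f n) = f n - (if n < N then f n else 0) := by
      intro n; split <;> simp
    rw [tsum_congr heq, Summable.tsum_sub hf hite]
    congr 1
    rw [tsum_eq_sum (s := Finset.range N)
      (fun n hn => by simp only [Finset.mem_range, not_lt] at hn; rw [if_neg (not_lt.mpr hn)])]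
    exact Finset.sum_congr rfl
      (fun n hn => by simp only [Finset.mem_range] at hn; rw [if_pos hn])
  have h1 : Filter.Tendsto (fun N => (∑' n, f n) - ∑ n ∈ Finset.range N, f n)
      Filter.atTop (nhds ((∑' n, f n) - ∑' n, f n)) :=
    Filter.Tendsto.const_sub _ hf.hasSum.tendsto_sum_nat
  simpa [key] using h1

/-- For nuclear Köthe spaces, a family of continuous linear operators is
S-tame iff the S-tameness estimates hold on the basis vectors. -/
theorem stmt1 (a b : ℕ → ℕ → ℝ) (ha : IsKotheMatrix a) (hb : IsKotheMatrix b)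
    (hna : IsNuclearKothe a) (hnb : IsNuclearKothe b)
    (S : ℕ → ℕ) (hS : Monotone S)
    (A : Set ((ℕ → ℝ) →ₗ[ℝ] (ℕ → ℝ)))
    (hA : ∀ T ∈ A, (∀ x, InKothe a x → InKothe b (T x)) ∧
      ∀ k, ∃ m, ∃ C > 0, ∀ x, InKothe a x → kNorm b k (T x) ≤ C * kNorm a m x) :
    (∀ T ∈ A, ∃ k₀ : ℕ, ∃ C > 0, ∀ k, k₀ ≤ k → ∀ x, InKothe a x →
        kNorm b k (T x) ≤ C * kNorm a (S k) x)
    ↔ (∀ T ∈ A, ∃ k₀ : ℕ, ∃ C > 0, ∀ k, k₀ ≤ k → ∀ n,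
        kNorm b k (T (unitVec n)) ≤ C * kNorm a (S k) (unitVec n)) := by
  constructor
  · intro h T hT
    obtain ⟨k₀, C, hC, H⟩ := h T hT
    exact ⟨k₀, C, hC, fun k hk n => H k hk (unitVec n) (unitVec_inKothe a n)⟩
  · intro h T hT
    obtain ⟨hmap, hcont⟩ := hA T hT
    obtain ⟨k₀, C, hC, H⟩ := h T hT
    refine ⟨k₀, C, hC, fun k hk x hx => ?_⟩
    obtain ⟨m, Ck, hCk, Hk⟩ := hcont k
    -- finite sections of x
    set xN : ℕ → (ℕ → ℝ) := fun N n => if n < N then x n else 0 with hxNdef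
    have hxN_in : ∀ N, InKothe a (xN N) := by
      intro N k'
      apply summable_of_ne_finset_zero (s := Finset.range N)
      intro n hn
      simp only [Finset.mem_range, not_lt] at hn
      simp [hxNdef, Nat.not_lt.mpr hn]
    have hdiff_eq : ∀ N n, x n - xN N n = if n < N then 0 else x n := by
      intro N n; simp only [hxNdef]; split <;> simp
    have hdiff_in : ∀ N, InKothe a (x - xN N) := by
      intro N k'
      refine Summable.of_nonneg_of_le
        (fun n => mul_nonneg (abs_nonneg _) (ha.nonneg n k')) ?_ (hx k')
      intro n
      show |(x - xN N) n| * a n k' ≤ |x n| * a n k'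
      rw [Pi.sub_apply, hdiff_eq N n]
      split
      · simpa using mul_nonneg (abs_nonneg (x n)) (ha.nonneg n k')
      · exact le_refl _
    -- decomposition of x
    have hdecomp : ∀ N, T x = T (xN N) + T (x - xN N) := by
      intro N
      rw [← map_add]
      congr 1
      funext n
      simp [hxNdef]
    -- the finite section is a finite combination of unit vectors
    have hsec : ∀ N, xN N = ∑ n ∈ Finset.range N, x n • unitVec n := by
      intro N
      funext j
      simp only [Finset.sum_apply, Pi.smul_apply, unitVec, smul_eq_mul, mul_ite,
        mul_one, mul_zero, hxNdef]
      rw [Finset.sum_ite_eq (Finset.range N) j x]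
      simp [Finset.mem_range]
    -- bound on the finite part
    have hfin : ∀ N, kNorm b k (T (xN N)) ≤ C * kNorm a (S k) x := by
      intro N
      have hTsec : T (xN N) = ∑ n ∈ Finset.range N, x n • T (unitVec n) := by
        rw [hsec N, map_sum]
        simp
      have hsumm : ∀ n ∈ Finset.range N,
          Summable fun j => |(x n • T (unitVec n)) j| * b j k := by
        intro n _
        have := hmap (unitVec n) (unitVec_inKothe a n) k
        refine (this.mul_left |x n|).congr ?_
        intro j
        simp [abs_mul, mul_assoc]
      have h1 := (kNorm_sum b hb.nonneg k (Finset.range N)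
        (fun n => x n • T (unitVec n)) hsumm).2
      rw [hTsec]
      refine h1.trans ?_
      have h2 : ∀ n ∈ Finset.range N,
          kNorm b k (x n • T (unitVec n)) ≤ C * (|x n| * a n (S k)) := by
        intro n _
        rw [kNorm_smul]
        calc |x n| * kNorm b k (T (unitVec n))
            ≤ |x n| * (C * kNorm a (S k) (unitVec n)) :=
              mul_le_mul_of_nonneg_left (H k hk n) (abs_nonneg _)
          _ = C * (|x n| * a n (S k)) := by rw [kNorm_unitVec]; ring
      calc ∑ n ∈ Finset.range N, kNorm b k (x n • T (unitVec n))
          ≤ ∑ n ∈ Finset.range N, C * (|x n| * a n (S k)) := Finset.sum_le_sum h2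
        _ = C * ∑ n ∈ Finset.range N, |x n| * a n (S k) := by rw [Finset.mul_sum]
        _ ≤ C * kNorm a (S k) x := by
            refine mul_le_mul_of_nonneg_left ?_ (le_of_lt hC)
            exact Summable.sum_le_tsum (Finset.range N)
              (fun n _ => mul_nonneg (abs_nonneg _) (ha.nonneg n (S k))) (hx (S k))
    -- bound on the tail part
    set tail : ℕ → ℝ := fun N => ∑' n, if n < N then 0 else |x n| * a n m with htaildef
    have htail : ∀ N, kNorm b k (T (x - xN N)) ≤ Ck * tail N := by
      intro N
      refine (Hk (x - xN N) (hdiff_in N)).trans ?_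
      refine mul_le_mul_of_nonneg_left (le_of_eq ?_) (le_of_lt hCk)
      unfold kNorm
      refine tsum_congr fun n => ?_
      rw [Pi.sub_apply, hdiff_eq N n]
      split <;> simp
    -- combine
    have hmain : ∀ N, kNorm b k (T x) ≤ C * kNorm a (S k) x + Ck * tail N := by
      intro N
      calc kNorm b k (T x)
          = kNorm b k (T (xN N) + T (x - xN N)) := by rw [← hdecomp N]
        _ ≤ kNorm b k (T (xN N)) + kNorm b k (T (x - xN N)) :=
            kNorm_add_le b hb.nonneg k _ _ (hmap _ (hxN_in N) k) (hmap _ (hdiff_in N) k)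
        _ ≤ C * kNorm a (S k) x + Ck * tail N := add_le_add (hfin N) (htail N)
    have htend : Filter.Tendsto (fun N => C * kNorm a (S k) x + Ck * tail N)
        Filter.atTop (nhds (C * kNorm a (S k) x)) := by
      have h0 : Filter.Tendsto tail Filter.atTop (nhds 0) :=
        tail_tendsto (fun n => |x n| * a n m) (hx m)
          (fun n => mul_nonneg (abs_nonneg _) (ha.nonneg n m))
      have := (h0.const_mul Ck).const_add (C * kNorm a (S k) x)
      simpa using this
    exact ge_of_tendsto' htend hmain
end
end

section
/- Let K(a_{n,k}) and K(b_{n,k}) be Köthe spaces and θ = (θ_n)_{n≥0} a sequence with θ_0 ≠ 0. If the lower triangular Toeplitz operator T̂_θ : K(a_{n,k}) → K(b_{n,k}), defined by T̂_θ e_n = Σ_{j≥n} θ_{j-n} e_j, is continuous, then θ ∈ K(b_{n,k}) and for every k ∈ ℕ there exist m ∈ ℕ and C > 0 such that b_{n,k} ≤ C a_{n,m} for all n ∈ ℕ. -/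
open scoped BigOperators
noncomputable section

lemma hatT_unitVec (θ : ℕ → ℝ) (n j : ℕ) :
    hatT θ (unitVec n) j = if n ≤ j then θ (j - n) else 0 := by
  simp only [hatT, unitVec, mul_ite, mul_one, mul_zero]
  rw [Finset.sum_ite_eq' (Finset.range (j + 1)) n fun i => θ (j - i)]
  simp [Nat.lt_succ_iff]

/-- If the lower triangular Toeplitz operator `T̂_θ : K(a) → K(b)` is
continuous then `θ ∈ K(b)` and the matrix `b` is dominated by the matrix `a`. -/
theorem stmt2 (a b : ℕ → ℕ → ℝ) (ha : IsKotheMatrix a) (hb : IsKotheMatrix b)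
    (θ : ℕ → ℝ) (hθ : θ 0 ≠ 0)
    (hT : (∀ x, InKothe a x → InKothe b (hatT θ x)) ∧
      ∀ k, ∃ m, ∃ C > 0, ∀ x, InKothe a x →
        kNorm b k (hatT θ x) ≤ C * kNorm a m x) :
    InKothe b θ ∧ ∀ k, ∃ m, ∃ C > 0, ∀ n, b n k ≤ C * a n m := by
  have hθfun : hatT θ (unitVec 0) = θ := by
    funext j
    rw [hatT_unitVec]
    simp
  constructor
  · have := hT.1 (unitVec 0) (unitVec_inKothe a 0)
    rwa [hθfun] at this
  · intro k
    obtain ⟨m, C, hC, hbd⟩ := hT.2 k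
    refine ⟨m, C / |θ 0|, div_pos hC (abs_pos.mpr hθ), fun n => ?_⟩
    have hin := unitVec_inKothe a n
    have hsum : Summable fun j => |hatT θ (unitVec n) j| * b j k := hT.1 _ hin k
    have h1 : |θ 0| * b n k ≤ kNorm b k (hatT θ (unitVec n)) := by
      have := Summable.le_tsum hsum n (fun j _ => mul_nonneg (abs_nonneg _) (hb.nonneg j k))
      simpa [hatT_unitVec, kNorm] using this
    have h2 : kNorm a m (unitVec n) = a n m := by
      unfold kNorm
      rw [tsum_eq_single n]
      · simp [unitVec]
      · intro j hj; simp [unitVec, hj]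
    have h3 := hbd (unitVec n) hin
    rw [h2] at h3
    have hθ0 : 0 < |θ 0| := abs_pos.mpr hθ
    rw [div_mul_eq_mul_div, le_div_iff₀ hθ0]
    calc b n k * |θ 0| = |θ 0| * b n k := mul_comm _ _
      _ ≤ kNorm b k (hatT θ (unitVec n)) := h1
      _ ≤ C * a n m := le_trans h3 (le_refl _)
end
end

section
/- Let β be a non-negative increasing sequence tending to infinity satisfying: there exists M ∈ ℕ such that β_s ≤ M(β_{s-t} + β_t) for all t and all s > t. Let θ be a sequence with θ_0 ≠ 0. The lower triangular Toeplitz operator T̂_θ : K(a_{n,k}) → Λ_∞(β) is continuous if and only if θ ∈ Λ_∞(β) and for every k ∈ ℕ there exist m ∈ ℕ and C > 0 with e^{kβ_n} ≤ C a_{n,m} for all n ≥ k. -/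
open scoped BigOperators
noncomputable section

lemma aMono (a : ℕ → ℕ → ℝ) (ha : IsKotheMatrix a) (n : ℕ) : Monotone (a n) :=
  monotone_nat_of_le_succ (ha.mono n)

/-- Extend a tail domination `w n ≤ C a n m` for `n ≥ N` to all `n`. -/
lemma dom_ext (a : ℕ → ℕ → ℝ) (ha : IsKotheMatrix a) (w : ℕ → ℝ) (hw : ∀ n, 0 < w n) :
    ∀ N : ℕ, (∃ m, ∃ C > 0, ∀ n, N ≤ n → w n ≤ C * a n m) →
      ∃ m, ∃ C > 0, ∀ n, w n ≤ C * a n m := by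
  intro N
  induction N with
  | zero =>
    rintro ⟨m, C, hC, h⟩
    exact ⟨m, C, hC, fun n => h n (Nat.zero_le n)⟩
  | succ N ih =>
    rintro ⟨m, C, hC, h⟩
    obtain ⟨kN, hkN⟩ := ha.pos N
    set m' := max m kN with hm'
    have hpos : 0 < a N m' := lt_of_lt_of_le hkN (aMono a ha N (le_max_right _ _))
    refine ih ⟨m', max C (w N / a N m'), lt_of_lt_of_le hC (le_max_left _ _), ?_⟩
    intro n hn
    rcases eq_or_lt_of_le hn with hEq | hlt
    · rw [← hEq]
      have h1 : w N / a N m' * a N m' = w N := div_mul_cancel₀ _ hpos.ne'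
      calc w N = w N / a N m' * a N m' := h1.symm
        _ ≤ max C (w N / a N m') * a N m' :=
            mul_le_mul_of_nonneg_right (le_max_right _ _) hpos.le
    · calc w n ≤ C * a n m := h n hlt
        _ ≤ max C (w N / a N m') * a n m' :=
            mul_le_mul (le_max_left _ _) (aMono a ha n (le_max_left _ _)) (ha.nonneg n m)
              (le_trans hC.le (le_max_left _ _))

/-- Core estimate for the backward direction. -/
lemma core_est (a : ℕ → ℕ → ℝ) (ha : IsKotheMatrix a)
    (β : ℕ → ℝ) (hβ0 : ∀ n, 0 ≤ β n)
    (M : ℕ) (hMpos : 0 < M) (hM : GrowthCond β M)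
    (θ : ℕ → ℝ) (hθs : memInf β θ)
    (hdom : ∀ k : ℕ, 0 < k → ∃ m, ∃ C > 0, ∀ n, k ≤ n → infW β k n ≤ C * a n m)
    (k : ℕ) (hk : 0 < k) :
    ∃ m, ∃ C > 0, ∀ x, InKothe a x →
      Summable (fun j => |hatT θ x j| * infW β k j) ∧
      (∑' j, |hatT θ x j| * infW β k j) ≤ C * kNorm a m x := by
  set K := k * M with hKdef
  have hK : 0 < K := Nat.mul_pos hk hMpos
  obtain ⟨m, C, hC, hdomK⟩ :=
    dom_ext a ha (infW β K) (fun n => Real.exp_pos _) K (hdom K hK)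
  set G : ℕ → ℝ := fun p => |θ p| * infW β K p with hGdef
  have hGnn : ∀ p, 0 ≤ G p := fun p => mul_nonneg (abs_nonneg _) (Real.exp_pos _).le
  have hGsum : Summable G := hθs K hK
  set T := ∑' p, G p with hTdef
  have hT0 : 0 ≤ T := tsum_nonneg hGnn
  refine ⟨m, C * (T + 1), by positivity, fun x hx => ?_⟩
  set F : ℕ → ℝ := fun i => |x i| * infW β K i with hFdef
  have hFnn : ∀ i, 0 ≤ F i := fun i => mul_nonneg (abs_nonneg _) (Real.exp_pos _).le
  have hFle : ∀ i, F i ≤ C * (|x i| * a i m) := by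
    intro i
    have := hdomK i
    calc F i = |x i| * infW β K i := rfl
      _ ≤ |x i| * (C * a i m) := mul_le_mul_of_nonneg_left this (abs_nonneg _)
      _ = C * (|x i| * a i m) := by ring
  have hFsum : Summable F :=
    Summable.of_nonneg_of_le hFnn hFle ((hx m).mul_left C)
  -- key pointwise exponential estimate
  have key : ∀ j i, i ≤ j → infW β k j ≤ infW β K (j - i) * infW β K i := by
    intro j i hij
    rw [infW, infW, infW, ← Real.exp_add]
    apply Real.exp_le_exp.2
    rcases eq_or_lt_of_le hij with hEq | hlt
    · subst hEq
      have h0 : i - i = 0 := Nat.sub_self i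
      rw [h0]
      have hb0 : 0 ≤ β 0 := hβ0 0
      have hbi : 0 ≤ β i := hβ0 i
      have hkK : (k : ℝ) ≤ (K : ℝ) := by
        have : k ≤ K := Nat.le_mul_of_pos_right k hMpos
        exact_mod_cast this
      have hKnn : (0:ℝ) ≤ (K : ℝ) := Nat.cast_nonneg K
      nlinarith
    · have h1 := hM i j hlt
      have hk' : (0:ℝ) ≤ (k : ℝ) := Nat.cast_nonneg k
      have hKM : (K : ℝ) = (k : ℝ) * (M : ℝ) := by push_cast [hKdef]; ring
      have h2 : (k:ℝ) * β j ≤ (k:ℝ) * ((M:ℝ) * (β (j - i) + β i)) :=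
        mul_le_mul_of_nonneg_left h1 hk'
      calc (k:ℝ) * β j ≤ (k:ℝ) * ((M:ℝ) * (β (j - i) + β i)) := h2
        _ = (K:ℝ) * β (j - i) + (K:ℝ) * β i := by rw [hKM]; ring
  -- pointwise convolution bound
  have hptw : ∀ j, |hatT θ x j| * infW β k j ≤
      ∑ i ∈ Finset.range (j + 1), F i * G (j - i) := by
    intro j
    have h1 : |hatT θ x j| ≤ ∑ i ∈ Finset.range (j + 1), |θ (j - i) * x i| :=
      Finset.abs_sum_le_sum_abs _ _
    calc |hatT θ x j| * infW β k j
        ≤ (∑ i ∈ Finset.range (j + 1), |θ (j - i) * x i|) * infW β k j :=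
          mul_le_mul_of_nonneg_right h1 (Real.exp_pos _).le
      _ = ∑ i ∈ Finset.range (j + 1), |θ (j - i) * x i| * infW β k j := Finset.sum_mul _ _ _
      _ ≤ ∑ i ∈ Finset.range (j + 1), F i * G (j - i) := by
          apply Finset.sum_le_sum
          intro i hi
          have hij : i ≤ j := Nat.lt_succ_iff.1 (Finset.mem_range.1 hi)
          have h2 := key j i hij
          have h3 : |θ (j - i) * x i| * infW β k j ≤
              |θ (j - i) * x i| * (infW β K (j - i) * infW β K i) :=
            mul_le_mul_of_nonneg_left h2 (abs_nonneg _)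
          calc |θ (j - i) * x i| * infW β k j
              ≤ |θ (j - i) * x i| * (infW β K (j - i) * infW β K i) := h3
            _ = F i * G (j - i) := by rw [abs_mul]; simp only [hFdef, hGdef]; ring
  have hFnorm : Summable fun i => ‖F i‖ := by
    simpa [Real.norm_eq_abs, abs_of_nonneg (hFnn _)] using hFsum
  have hGnorm : Summable fun p => ‖G p‖ := by
    simpa [Real.norm_eq_abs, abs_of_nonneg (hGnn _)] using hGsum
  have hcauchy : Summable fun j => ∑ i ∈ Finset.range (j + 1), F i * G (j - i) :=
    (summable_norm_sum_mul_range_of_summable_norm hFnorm hGnorm).of_norm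
  have hsum : Summable (fun j => |hatT θ x j| * infW β k j) :=
    Summable.of_nonneg_of_le
      (fun j => mul_nonneg (abs_nonneg _) (Real.exp_pos _).le) hptw hcauchy
  refine ⟨hsum, ?_⟩
  have h1 : (∑' j, |hatT θ x j| * infW β k j) ≤
      ∑' j, ∑ i ∈ Finset.range (j + 1), F i * G (j - i) :=
    Summable.tsum_le_tsum hptw hsum hcauchy
  have h2 : (∑' j, ∑ i ∈ Finset.range (j + 1), F i * G (j - i)) = (∑' i, F i) * ∑' p, G p :=
    (tsum_mul_tsum_eq_tsum_sum_range_of_summable_norm hFnorm hGnorm).symm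
  have hFbound : (∑' i, F i) ≤ C * kNorm a m x := by
    have : C * kNorm a m x = ∑' i, C * (|x i| * a i m) := by
      rw [kNorm, ← tsum_mul_left]
    rw [this]
    exact Summable.tsum_le_tsum hFle hFsum ((hx m).mul_left C)
  have hF0 : 0 ≤ ∑' i, F i := tsum_nonneg hFnn
  have hkN0 : 0 ≤ kNorm a m x :=
    tsum_nonneg fun n => mul_nonneg (abs_nonneg _) (ha.nonneg n m)
  calc (∑' j, |hatT θ x j| * infW β k j)
      ≤ (∑' i, F i) * ∑' p, G p := h1.trans h2.le
    _ = (∑' i, F i) * T := by rw [hTdef]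
    _ ≤ (C * kNorm a m x) * T := mul_le_mul_of_nonneg_right hFbound hT0
    _ ≤ C * (T + 1) * kNorm a m x := by nlinarith

/-- Under the growth condition on `β`, `T̂_θ : K(a) → Λ_∞(β)` is continuous
iff `θ ∈ Λ_∞(β)` and for every `k` there are `m`, `C > 0` with
`e^{k β_n} ≤ C a_{n,m}` for all `n ≥ k`. -/
theorem stmt6 (a : ℕ → ℕ → ℝ) (ha : IsKotheMatrix a)
    (β : ℕ → ℝ) (hβ0 : ∀ n, 0 ≤ β n) (hβm : Monotone β)
    (hβi : Filter.Tendsto β Filter.atTop Filter.atTop)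
    (M : ℕ) (hM : GrowthCond β M)
    (θ : ℕ → ℝ) (hθ : θ 0 ≠ 0) :
    ((∀ x, InKothe a x → memInf β (hatT θ x)) ∧
      ∀ k : ℕ, 0 < k → ∃ m, ∃ C > 0, ∀ x, InKothe a x →
        infNorm β k (hatT θ x) ≤ C * kNorm a m x)
    ↔ (memInf β θ ∧
       ∀ k : ℕ, 0 < k → ∃ m, ∃ C > 0, ∀ n, k ≤ n → infW β k n ≤ C * a n m) := by
  constructor
  · rintro ⟨h1, h2⟩
    -- unit vectors lie in the Köthe space
    have huK : ∀ n, InKothe a (unitVec n) := by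
      intro n k
      apply summable_of_ne_finset_zero (s := {n})
      intro j hj
      have hjn : j ≠ n := by simpa using hj
      simp [unitVec, hjn]
    have hhat : ∀ n j, hatT θ (unitVec n) j = if n ≤ j then θ (j - n) else 0 := by
      intro n j
      simp [hatT, unitVec, mul_ite, mul_one, mul_zero, Finset.sum_ite_eq',
        Finset.mem_range, Nat.lt_succ_iff]
    have hθmem : memInf β θ := by
      intro k hk
      have h0 : hatT θ (unitVec 0) = θ := by
        funext j; simp [hhat]
      have := h1 (unitVec 0) (huK 0) k hk
      rwa [h0] at this
    refine ⟨hθmem, fun k hk => ?_⟩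
    obtain ⟨m, C, hC, hbound⟩ := h2 k hk
    refine ⟨m, C / |θ 0|, div_pos hC (abs_pos.2 hθ), fun n _ => ?_⟩
    have hb := hbound (unitVec n) (huK n)
    have hkn : kNorm a m (unitVec n) = a n m := by
      rw [kNorm, tsum_eq_single n]
      · simp [unitVec]
      · intro j hj; simp [unitVec, hj]
    have hsum := h1 (unitVec n) (huK n) k hk
    have hterm : |θ 0| * infW β k n ≤ infNorm β k (hatT θ (unitVec n)) := by
      have hle := Summable.le_tsum hsum n
        (fun j _ => mul_nonneg (abs_nonneg _) (Real.exp_pos _).le)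
      have hn : hatT θ (unitVec n) n = θ 0 := by simp [hhat]
      rw [hn] at hle
      exact hle
    have hfin : |θ 0| * infW β k n ≤ C * a n m := by
      calc |θ 0| * infW β k n ≤ infNorm β k (hatT θ (unitVec n)) := hterm
        _ ≤ C * kNorm a m (unitVec n) := hb
        _ = C * a n m := by rw [hkn]
    have hθ0 : 0 < |θ 0| := abs_pos.2 hθ
    rw [div_mul_eq_mul_div, le_div_iff₀ hθ0]
    calc infW β k n * |θ 0| = |θ 0| * infW β k n := by ring
      _ ≤ C * a n m := hfin
  · rintro ⟨hθmem, hdom⟩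
    have hMpos : 0 < M := by
      rcases Nat.eq_zero_or_pos M with h0 | h
      · exfalso
        subst h0
        obtain ⟨s₀, hs₀⟩ := Filter.eventually_atTop.1 (hβi.eventually_ge_atTop 1)
        have h1 : (1:ℝ) ≤ β (s₀ + 1) := hs₀ (s₀ + 1) (Nat.le_succ s₀)
        have h2 := hM 0 (s₀ + 1) (Nat.succ_pos s₀)
        push_cast at h2
        linarith
      · exact h
    constructor
    · intro x hx k hk
      obtain ⟨m, C, hC, hcore⟩ := core_est a ha β hβ0 M hMpos hM θ hθmem hdom k hk
      exact (hcore x hx).1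
    · intro k hk
      obtain ⟨m, C, hC, hcore⟩ := core_est a ha β hβ0 M hMpos hM θ hθmem hdom k hk
      exact ⟨m, C, hC, fun x hx => (hcore x hx).2⟩
end
end

section
/- Let Λ_∞(α) be an infinite type power series space and K(b_{n,k}) a nuclear Köthe space. Let θ_0 ≠ 0. The upper triangular Toeplitz operator Ť_θ : Λ_∞(α) → K(b_{n,k}) is continuous if and only if θ ∈ (Λ_∞(α))′ (i.e. |θ_{n-1}| ≤ C₁ e^{m₁ α_n} for some m₁, C₁) and for every k ∈ ℕ there exist m ∈ ℕ and C > 0 with b_{n,k} ≤ C e^{m α_n} for all n ∈ ℕ. -/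
/-!
Testing `Ť_θ` on the unit vectors `e_n`, whose images are the finite sequences
`(θ_n, θ_{n-1}, …, θ_0, 0, …)`, gives both conditions: the `0`-th coordinate bounds `θ_n` and
the `n`-th coordinate bounds `θ_0 b_{n,k}`.

Conversely, since `α` is increasing, `|θ_i| ≤ C₁ e^{m₁ α_i}` yields
`|(Ť_θ x)_j| e^{p α_j} ≤ C₁ ‖x‖_{m₁+p}`, so `Ť_θ` maps `Λ_∞(α)` into every weighted `ℓ^∞`
space with weight `e^{p α}`, hence into the one with weight `b_{·,l}`. By nuclearity,
`∑_n b_{n,k} / b_{n,l} < ∞` for some `l > k`, which turns this `ℓ^∞` bound into the `ℓ¹`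
bound defining the `k`-th norm of `K(b)`.
-/

open scoped BigOperators
noncomputable section

lemma IsKotheMatrix.monotone {b : ℕ → ℕ → ℝ} (hb : IsKotheMatrix b) (n : ℕ) : Monotone (b n) :=
  monotone_nat_of_le_succ (hb.mono n)

lemma abs_mul_le_kNorm {b : ℕ → ℕ → ℝ} (hb : IsKotheMatrix b) {y : ℕ → ℝ} {k : ℕ}
    (hy : Summable fun n => |y n| * b n k) (j : ℕ) : |y j| * b j k ≤ kNorm b k y :=
  hy.le_tsum j fun n _ => mul_nonneg (abs_nonneg _) (hb.nonneg n k)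

lemma IsKotheMatrix.summable_and_kNorm_le {b : ℕ → ℕ → ℝ} (hb : IsKotheMatrix b) {k l : ℕ}
    (hkl : k ≤ l) (hS : Summable fun n => b n k / b n l) {y : ℕ → ℝ} {D : ℝ}
    (hy : ∀ n, |y n| * b n l ≤ D) :
    (Summable fun n => |y n| * b n k) ∧ kNorm b k y ≤ D * ∑' n, b n k / b n l := by
  have hterm : ∀ n, |y n| * b n k ≤ D * (b n k / b n l) := fun n => by
    have hzero : b n l = 0 → b n k = 0 := fun h =>
      le_antisymm (h ▸ hb.monotone n hkl) (hb.nonneg n k)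
    have hratio : 0 ≤ b n k / b n l := div_nonneg (hb.nonneg n k) (hb.nonneg n l)
    calc |y n| * b n k = |y n| * (b n k / b n l * b n l) := by rw [div_mul_cancel_of_imp hzero]
      _ = b n k / b n l * (|y n| * b n l) := by ring
      _ ≤ b n k / b n l * D := mul_le_mul_of_nonneg_left (hy n) hratio
      _ = D * (b n k / b n l) := mul_comm _ _
  have hsum : Summable fun n => |y n| * b n k :=
    (hS.mul_left D).of_nonneg_of_le (fun n => mul_nonneg (abs_nonneg _) (hb.nonneg n k)) hterm
  refine ⟨hsum, ?_⟩
  rw [kNorm, ← hS.tsum_mul_left]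
  exact hsum.tsum_le_tsum hterm (hS.mul_left D)

lemma memInf_unitVec (α : ℕ → ℝ) (N : ℕ) : memInf α (unitVec N) := fun _ _ =>
  summable_of_ne_finset_zero (s := {N}) fun n hn => by
    simp [unitVec, Finset.mem_singleton.not.mp hn]

lemma infNorm_unitVec (α : ℕ → ℝ) (m N : ℕ) : infNorm α m (unitVec N) = infW α m N := by
  rw [infNorm, tsum_eq_single N fun n hn => by simp [unitVec, hn]]
  simp [unitVec]

lemma checkT_unitVec (θ : ℕ → ℝ) {N j : ℕ} (hjN : j ≤ N) :
    checkT θ (unitVec N) j = θ (N - j) := by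
  rw [checkT, tsum_eq_single (N - j) fun i hi => by
    rw [unitVec, if_neg (by omega), mul_zero]]
  simp [unitVec, Nat.add_sub_cancel' hjN]

lemma abs_mul_le_of_checkT_bounded {α : ℕ → ℝ} {b : ℕ → ℕ → ℝ} (hb : IsKotheMatrix b)
    {θ : ℕ → ℝ} (hK : ∀ x, memInf α x → InKothe b (checkT θ x)) {k m : ℕ} {C : ℝ}
    (hE : ∀ x, memInf α x → kNorm b k (checkT θ x) ≤ C * infNorm α m x) {N j : ℕ}
    (hjN : j ≤ N) : |θ (N - j)| * b j k ≤ C * infW α m N := by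
  have h := (abs_mul_le_kNorm hb (hK _ (memInf_unitVec α N) k) j).trans
    (hE _ (memInf_unitVec α N))
  rwa [checkT_unitVec θ hjN, infNorm_unitVec] at h

lemma infW_pos (α : ℕ → ℝ) (k n : ℕ) : 0 < infW α k n := Real.exp_pos _

lemma infW_mul_infW_le {α : ℕ → ℝ} (hα0 : ∀ n, 0 ≤ α n) (hαm : Monotone α) {m₁ p m : ℕ}
    (hm : m₁ + p ≤ m) (i j : ℕ) : infW α m₁ i * infW α p j ≤ infW α m (j + i) := by
  rw [infW, infW, infW, ← Real.exp_add, Real.exp_le_exp]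
  have hi : (m₁ : ℝ) * α i ≤ m₁ * α (j + i) :=
    mul_le_mul_of_nonneg_left (hαm (Nat.le_add_left i j)) m₁.cast_nonneg
  have hj : (p : ℝ) * α j ≤ p * α (j + i) :=
    mul_le_mul_of_nonneg_left (hαm (Nat.le_add_right j i)) p.cast_nonneg
  have hmp : ((m₁ + p : ℕ) : ℝ) * α (j + i) ≤ m * α (j + i) :=
    mul_le_mul_of_nonneg_right (Nat.cast_le.mpr hm) (hα0 _)
  push_cast at hmp
  linarith

lemma abs_checkT_mul_infW_le {α : ℕ → ℝ} (hα0 : ∀ n, 0 ≤ α n) (hαm : Monotone α)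
    {θ : ℕ → ℝ} {m₁ : ℕ} {C₁ : ℝ} (hθ : ∀ n, |θ n| ≤ C₁ * infW α m₁ n) {p m : ℕ}
    (hm : m₁ + p ≤ m) {x : ℕ → ℝ} (hx : Summable fun n => |x n| * infW α m n) (j : ℕ) :
    |checkT θ x j| * infW α p j ≤ C₁ * infNorm α m x := by
  have hshift : Summable fun i => |x (j + i)| * infW α m (j + i) :=
    hx.comp_injective (add_right_injective j)
  have hC₁ : 0 ≤ C₁ := nonneg_of_mul_nonneg_left ((abs_nonneg _).trans (hθ 0)) (infW_pos α m₁ 0)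
  have hterm : ∀ i, ‖θ i * x (j + i) * infW α p j‖ ≤ C₁ * (|x (j + i)| * infW α m (j + i)) :=
    fun i => by
      rw [Real.norm_eq_abs, abs_mul, abs_mul, abs_of_pos (infW_pos α p j)]
      calc |θ i| * |x (j + i)| * infW α p j
          ≤ C₁ * infW α m₁ i * |x (j + i)| * infW α p j :=
            mul_le_mul_of_nonneg_right (mul_le_mul_of_nonneg_right (hθ i) (abs_nonneg _))
              (infW_pos α p j).le
        _ = C₁ * (|x (j + i)| * (infW α m₁ i * infW α p j)) := by ring
        _ ≤ C₁ * (|x (j + i)| * infW α m (j + i)) := by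
          gcongr
          exact infW_mul_infW_le hα0 hαm hm i j
  calc |checkT θ x j| * infW α p j = ‖∑' i, θ i * x (j + i) * infW α p j‖ := by
        rw [tsum_mul_right, Real.norm_eq_abs, abs_mul, abs_of_pos (infW_pos α p j), checkT]
    _ ≤ C₁ * ∑' i, |x (j + i)| * infW α m (j + i) :=
        tsum_of_norm_bounded (hshift.hasSum.mul_left C₁) hterm
    _ ≤ C₁ * infNorm α m x := by
        refine mul_le_mul_of_nonneg_left ?_ hC₁
        exact hshift.tsum_le_tsum_of_inj (j + ·) (add_right_injective j)
          (fun n _ => mul_nonneg (abs_nonneg _) (infW_pos α m n).le) (fun _ => le_rfl) hx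

lemma exists_summable_and_kNorm_checkT_le {α : ℕ → ℝ} (hα0 : ∀ n, 0 ≤ α n)
    (hαm : Monotone α) {b : ℕ → ℕ → ℝ} (hb : IsKotheMatrix b) (hnb : IsNuclearKothe b)
    {θ : ℕ → ℝ} {m₁ : ℕ} {C₁ : ℝ} (hC₁ : 0 < C₁) (hθ : ∀ n, |θ n| ≤ C₁ * infW α m₁ n)
    (hbd : ∀ k, ∃ m, ∃ C > 0, ∀ n, b n k ≤ C * infW α m n) (k : ℕ) :
    ∃ m, ∃ C > 0, ∀ x, memInf α x →
      (Summable fun n => |checkT θ x n| * b n k) ∧ kNorm b k (checkT θ x) ≤ C * infNorm α m x := by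
  obtain ⟨l, hkl, hS⟩ := hnb k
  obtain ⟨p, Cl, hCl, hbl⟩ := hbd l
  set S := ∑' n, b n k / b n l
  have hS0 : 0 ≤ S := tsum_nonneg fun n => div_nonneg (hb.nonneg n k) (hb.nonneg n l)
  refine ⟨m₁ + p + 1, Cl * C₁ * (S + 1), by positivity, fun x hx => ?_⟩
  set N := infNorm α (m₁ + p + 1) x
  have hN : 0 ≤ N := tsum_nonneg fun n => mul_nonneg (abs_nonneg _) (infW_pos α _ n).le
  have hy : ∀ n, |checkT θ x n| * b n l ≤ Cl * (C₁ * N) := fun n =>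
    calc |checkT θ x n| * b n l ≤ |checkT θ x n| * (Cl * infW α p n) :=
          mul_le_mul_of_nonneg_left (hbl n) (abs_nonneg _)
      _ = Cl * (|checkT θ x n| * infW α p n) := by ring
      _ ≤ Cl * (C₁ * N) := mul_le_mul_of_nonneg_left
          (abs_checkT_mul_infW_le hα0 hαm hθ (Nat.le_succ _) (hx _ (Nat.succ_pos _)) n) hCl.le
  obtain ⟨hsum, hle⟩ := hb.summable_and_kNorm_le hkl.le hS hy
  refine ⟨hsum, hle.trans ?_⟩
  calc Cl * (C₁ * N) * S = Cl * C₁ * S * N := by ring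
    _ ≤ Cl * C₁ * (S + 1) * N := by gcongr; linarith

theorem stmt12_general (α : ℕ → ℝ) (hα0 : ∀ n, 0 ≤ α n) (hαm : Monotone α)
    (b : ℕ → ℕ → ℝ) (hb : IsKotheMatrix b) (hnb : IsNuclearKothe b)
    (θ : ℕ → ℝ) (hθ : θ 0 ≠ 0) :
    ((∀ x, memInf α x → InKothe b (checkT θ x)) ∧
      ∀ k, ∃ m, ∃ C > 0, ∀ x, memInf α x →
        kNorm b k (checkT θ x) ≤ C * infNorm α m x)
    ↔ ((∃ m, ∃ C > 0, ∀ n, |θ n| ≤ C * infW α m n) ∧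
       ∀ k, ∃ m, ∃ C > 0, ∀ n, b n k ≤ C * infW α m n) := by
  constructor
  · rintro ⟨hK, hE⟩
    refine ⟨?_, fun k => ?_⟩
    · obtain ⟨k₀, hk₀⟩ := hb.pos 0
      obtain ⟨m, C, hC, hCE⟩ := hE k₀
      refine ⟨m, C / b 0 k₀, div_pos hC hk₀, fun n => ?_⟩
      rw [div_mul_eq_mul_div, le_div_iff₀ hk₀]
      simpa using abs_mul_le_of_checkT_bounded hb hK hCE (Nat.zero_le n)
    · obtain ⟨m, C, hC, hCE⟩ := hE k
      have hθ₀ : 0 < |θ 0| := abs_pos.mpr hθ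
      refine ⟨m, C / |θ 0|, div_pos hC hθ₀, fun n => ?_⟩
      rw [div_mul_eq_mul_div, le_div_iff₀ hθ₀, mul_comm]
      simpa using abs_mul_le_of_checkT_bounded hb hK hCE (le_refl n)
  · rintro ⟨⟨m₁, C₁, hC₁, hθb⟩, hbd⟩
    have hT := exists_summable_and_kNorm_checkT_le hα0 hαm hb hnb hC₁ hθb hbd
    refine ⟨fun x hx k => ?_, fun k => ?_⟩
    · obtain ⟨m, C, -, h⟩ := hT k
      exact (h x hx).1
    · obtain ⟨m, C, hC, h⟩ := hT k
      exact ⟨m, C, hC, fun x hx => (h x hx).2⟩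

/-- `Ť_θ : Λ_∞(α) → K(b)` (with `K(b)` nuclear) is continuous iff
`θ ∈ (Λ_∞(α))'` and for every `k` there are `m`, `C > 0` with
`b_{n,k} ≤ C e^{m α_n}` for all `n`. -/
theorem stmt12 (α : ℕ → ℝ) (hα0 : ∀ n, 0 ≤ α n) (hαm : Monotone α)
    (hαi : Filter.Tendsto α Filter.atTop Filter.atTop)
    (b : ℕ → ℕ → ℝ) (hb : IsKotheMatrix b) (hnb : IsNuclearKothe b)
    (θ : ℕ → ℝ) (hθ : θ 0 ≠ 0) :
    ((∀ x, memInf α x → InKothe b (checkT θ x)) ∧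
      ∀ k, ∃ m, ∃ C > 0, ∀ x, memInf α x →
        kNorm b k (checkT θ x) ≤ C * infNorm α m x)
    ↔ ((∃ m, ∃ C > 0, ∀ n, |θ n| ≤ C * infW α m n) ∧
       ∀ k, ∃ m, ∃ C > 0, ∀ n, b n k ≤ C * infW α m n) :=
  stmt12_general α hα0 hαm b hb hnb θ hθ
end
end

section
/- Let α be a non-negative increasing sequence tending to infinity with α_s ≤ M(α_{s-t} + α_t) for all s > t (some M), K(b_{n,k}) a nuclear Köthe space, and θ_0 ≠ 0. The upper triangular Toeplitz operator Ť_θ : Λ₁(α) → K(b_{n,k}) is compact if and only if θ ∈ (Λ₁(α))′ and there exists m ∈ ℕ such that for every k ∈ ℕ there is C > 0 with b_{n,k} ≤ C e^{-α_n/m} for all n ≥ k. -/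
open scoped BigOperators
noncomputable section

section Aux

/-- Partial row sums of the Toeplitz matrix against the Köthe weights. -/
def gSum (θ : ℕ → ℝ) (b : ℕ → ℕ → ℝ) (k n : ℕ) : ℝ :=
  ∑ j ∈ Finset.range (n + 1), |θ (n - j)| * b j k

lemma gSum_nonneg {θ : ℕ → ℝ} {b : ℕ → ℕ → ℝ} (hb : ∀ n k, 0 ≤ b n k) (k n : ℕ) :
    0 ≤ gSum θ b k n :=
  Finset.sum_nonneg fun j _ => mul_nonneg (abs_nonneg _) (hb j k)

lemma finW_pos (β : ℕ → ℝ) (k n : ℕ) : 0 < finW β k n := Real.exp_pos _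

lemma checkT_unitVec_s16 (θ : ℕ → ℝ) (n j : ℕ) :
    checkT θ (unitVec n) j = if j ≤ n then θ (n - j) else 0 := by
  unfold checkT unitVec
  split_ifs with h
  · rw [tsum_eq_single (n - j)]
    · have : j + (n - j) = n := by omega
      simp [this]
    · intro i hi
      have : j + i ≠ n := by omega
      simp [this]
  · have hz : ∀ i : ℕ, θ i * (if j + i = n then (1:ℝ) else 0) = 0 := by
      intro i
      have : j + i ≠ n := by omega
      simp [this]
    simp only [hz, tsum_zero]

lemma memFin_unitVec (α : ℕ → ℝ) (n : ℕ) : memFin α (unitVec n) := by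
  intro k _
  apply summable_of_ne_finset_zero (s := {n})
  intro j hj
  simp only [Finset.mem_singleton] at hj
  simp [unitVec, hj]

lemma finNorm_unitVec (α : ℕ → ℝ) (m n : ℕ) : finNorm α m (unitVec n) = finW α m n := by
  unfold finNorm
  rw [tsum_eq_single n (by intro j hj; simp [unitVec, hj])]
  simp [unitVec]

lemma term_le_kNorm {θ : ℕ → ℝ} {b : ℕ → ℕ → ℝ} (hb : ∀ n k, 0 ≤ b n k)
    {k n j : ℕ} (hjn : j ≤ n) :
    |θ (n - j)| * b j k ≤ kNorm b k (checkT θ (unitVec n)) := by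
  have hsum : Summable fun i => |checkT θ (unitVec n) i| * b i k := by
    apply summable_of_ne_finset_zero (s := Finset.range (n + 1))
    intro i hi
    simp only [Finset.mem_range] at hi
    rw [checkT_unitVec_s16, if_neg (by omega)]
    simp
  have h := Summable.le_tsum hsum j (fun i _ => mul_nonneg (abs_nonneg _) (hb i k))
  rwa [checkT_unitVec_s16, if_pos hjn] at h

/-- Main backward estimate: from the pointwise bound on the rows `gSum` we get both
summability and the norm estimate for `checkT θ x`. -/
lemma back_main (α : ℕ → ℝ) (b : ℕ → ℕ → ℝ) (θ : ℕ → ℝ) (k m : ℕ) (hm : 0 < m)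
    (C : ℝ) (hbnn : ∀ n k, 0 ≤ b n k)
    (hg : ∀ n, gSum θ b k n ≤ C * finW α m n)
    (x : ℕ → ℝ) (hx : memFin α x) :
    Summable (fun j => |checkT θ x j| * b j k) ∧
      kNorm b k (checkT θ x) ≤ C * finNorm α m x := by
  set G : ℕ × ℕ → ℝ :=
    fun p => if p.2 ≤ p.1 then |θ (p.1 - p.2)| * |x p.1| * b p.2 k else 0 with hGdef
  have hGnn : ∀ p, 0 ≤ G p := by
    intro p
    rw [hGdef]
    dsimp only
    split_ifs
    · exact mul_nonneg (mul_nonneg (abs_nonneg _) (abs_nonneg _)) (hbnn _ _)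
    · exact le_refl 0
  have hGrow : ∀ n, Summable fun j => G (n, j) := by
    intro n
    apply summable_of_ne_finset_zero (s := Finset.range (n + 1))
    intro j hj
    simp only [Finset.mem_range] at hj
    rw [hGdef]
    exact if_neg (by omega)
  have hGsum : ∀ n, ∑' j, G (n, j) = |x n| * gSum θ b k n := by
    intro n
    rw [tsum_eq_sum (s := Finset.range (n + 1))
      (by intro j hj; simp only [Finset.mem_range] at hj; rw [hGdef]; exact if_neg (by omega))]
    unfold gSum
    rw [Finset.mul_sum]
    apply Finset.sum_congr rfl
    intro j hj
    simp only [Finset.mem_range] at hj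
    rw [hGdef]
    dsimp only
    rw [if_pos (by omega)]
    ring
  have hxm : Summable fun n => |x n| * finW α m n := hx m hm
  have hgs : Summable fun n => |x n| * gSum θ b k n := by
    refine Summable.of_nonneg_of_le (f := fun n => C * (|x n| * finW α m n))
      (fun n => mul_nonneg (abs_nonneg _) (gSum_nonneg hbnn k n)) ?_ (hxm.mul_left C)
    intro n
    calc |x n| * gSum θ b k n ≤ |x n| * (C * finW α m n) :=
          mul_le_mul_of_nonneg_left (hg n) (abs_nonneg _)
      _ = C * (|x n| * finW α m n) := by ring
  have hrowsum : Summable fun n => ∑' j, G (n, j) := hgs.congr fun n => (hGsum n).symm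
  have hGS : Summable G := (summable_prod_of_nonneg hGnn).mpr ⟨hGrow, hrowsum⟩
  set φ : ℕ × ℕ → ℕ × ℕ := fun q => (q.1 + q.2, q.1) with hφdef
  have hφinj : Function.Injective φ := by
    intro p q h
    rw [hφdef] at h
    simp only [Prod.mk.injEq] at h
    exact Prod.ext h.2 (by omega)
  have hFS : Summable (G ∘ φ) := hGS.comp_injective hφinj
  have hFval : ∀ j i, G (φ (j, i)) = |θ i| * |x (j + i)| * b j k := by
    intro j i
    rw [hGdef, hφdef]
    dsimp only
    rw [if_pos (Nat.le_add_right j i)]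
    rw [Nat.add_sub_cancel_left]
  have hFnn : ∀ p : ℕ × ℕ, 0 ≤ (G ∘ φ) p := fun p => hGnn _
  have hFrows := (summable_prod_of_nonneg hFnn).mp hFS
  have hFrow : ∀ j, Summable fun i => G (φ (j, i)) := fun j => hFrows.1 j
  have hFrowsum : Summable fun j => ∑' i, G (φ (j, i)) := hFrows.2
  have hbound : ∀ j, |checkT θ x j| * b j k ≤ ∑' i, G (φ (j, i)) := by
    intro j
    rcases eq_or_lt_of_le (hbnn j k) with h0 | h0
    · rw [← h0, mul_zero]
      exact tsum_nonneg fun i => hGnn _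
    · have hsum1 : Summable fun i => |θ i| * |x (j + i)| := by
        have h := (hFrow j).mul_right (b j k)⁻¹
        apply h.congr
        intro i
        rw [hFval]
        field_simp
      have hsum2 : Summable fun i => ‖θ i * x (j + i)‖ := by
        apply hsum1.congr
        intro i
        rw [Real.norm_eq_abs, abs_mul]
      have hsum3 : Summable fun i => θ i * x (j + i) := Summable.of_norm hsum2
      have habs : |checkT θ x j| ≤ ∑' i, |θ i| * |x (j + i)| := by
        have h2 := norm_tsum_le_tsum_norm hsum2
        have h3 : (fun i => ‖θ i * x (j + i)‖) = fun i => |θ i| * |x (j + i)| := by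
          funext i; rw [Real.norm_eq_abs, abs_mul]
        rw [h3] at h2
        simpa [checkT, Real.norm_eq_abs] using h2
      calc |checkT θ x j| * b j k ≤ (∑' i, |θ i| * |x (j + i)|) * b j k :=
            mul_le_mul_of_nonneg_right habs (le_of_lt h0)
        _ = ∑' i, |θ i| * |x (j + i)| * b j k := (tsum_mul_right).symm
        _ = ∑' i, G (φ (j, i)) := by
            apply tsum_congr
            intro i
            rw [hFval]
  have hsum : Summable fun j => |checkT θ x j| * b j k :=
    Summable.of_nonneg_of_le (fun j => mul_nonneg (abs_nonneg _) (hbnn j k)) hbound hFrowsum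
  refine ⟨hsum, ?_⟩
  have hGsupp : Function.support G ⊆ Set.range φ := by
    intro p hp
    rw [Function.mem_support] at hp
    have hle : p.2 ≤ p.1 := by
      by_contra hc
      apply hp
      rw [hGdef]
      exact if_neg hc
    exact ⟨(p.2, p.1 - p.2), by rw [hφdef]; exact Prod.ext (by dsimp; omega) rfl⟩
  calc kNorm b k (checkT θ x) ≤ ∑' j, ∑' i, G (φ (j, i)) :=
        Summable.tsum_le_tsum hbound hsum hFrowsum
    _ = ∑' p : ℕ × ℕ, G (φ p) := (Summable.tsum_prod' hFS fun j => hFrow j).symm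
    _ = ∑' p, G p := hφinj.tsum_eq hGsupp
    _ = ∑' n, ∑' j, G (n, j) := Summable.tsum_prod' hGS hGrow
    _ = ∑' n, |x n| * gSum θ b k n := tsum_congr hGsum
    _ ≤ ∑' n, C * (|x n| * finW α m n) := by
        apply Summable.tsum_le_tsum _ hgs (hxm.mul_left C)
        intro n
        calc |x n| * gSum θ b k n ≤ |x n| * (C * finW α m n) :=
              mul_le_mul_of_nonneg_left (hg n) (abs_nonneg _)
          _ = C * (|x n| * finW α m n) := by ring
    _ = C * finNorm α m x := by rw [tsum_mul_left]; rfl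

lemma b_mono_le {b : ℕ → ℕ → ℝ} (hb : IsKotheMatrix b) (n : ℕ) {k l : ℕ} (h : k ≤ l) :
    b n k ≤ b n l := by
  have hmono : Monotone fun k => b n k := monotone_nat_of_le_succ fun k => hb.mono n k
  exact hmono h

lemma gSum_bound (α : ℕ → ℝ) (hα0 : ∀ n, 0 ≤ α n) (hαm : Monotone α)
    (M : ℕ) (hM : GrowthCond α M)
    (b : ℕ → ℕ → ℝ) (hb : IsKotheMatrix b)
    (θ : ℕ → ℝ) (m₁ m₂ : ℕ) (hm₁ : 0 < m₁) (hm₂ : 0 < m₂)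
    (C₀ : ℝ) (hC₀ : 0 < C₀) (hθb : ∀ n, |θ n| ≤ C₀ * finW α m₁ n)
    (k l : ℕ) (hkl : k < l) (hS : Summable fun n => b n k / b n l)
    (Cl : ℝ) (hCl : 0 < Cl) (hbl : ∀ n, l ≤ n → b n l ≤ Cl * finW α m₂ n) :
    ∃ C > 0, ∀ n, gSum θ b k n ≤ C * finW α ((M + 1) * m₁ * m₂) n := by
  set m : ℕ := (M + 1) * m₁ * m₂ with hmdef
  have hm1R : (1:ℝ) ≤ (m₁ : ℝ) := by exact_mod_cast hm₁
  have hm2R : (1:ℝ) ≤ (m₂ : ℝ) := by exact_mod_cast hm₂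
  have hMR : (0:ℝ) ≤ (M : ℝ) := Nat.cast_nonneg M
  have hmcast : (m : ℝ) = ((M:ℝ) + 1) * (m₁ : ℝ) * (m₂ : ℝ) := by
    rw [hmdef]; push_cast; ring
  set w : ℕ → ℝ := fun j => if j < l then b j k else Cl * (b j k / b j l) with hwdef
  have hwnn : ∀ j, 0 ≤ w j := by
    intro j; rw [hwdef]; dsimp only; split_ifs
    · exact hb.nonneg j k
    · exact mul_nonneg hCl.le (div_nonneg (hb.nonneg j k) (hb.nonneg j l))
  have hwsum : Summable w := by
    apply (summable_nat_add_iff l).mp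
    have h1 : Summable fun n => Cl * (b (n + l) k / b (n + l) l) :=
      (hS.comp_injective (add_left_injective l)).mul_left Cl
    apply h1.congr
    intro n
    rw [hwdef]; dsimp only
    rw [if_neg (by omega)]
  have hE : ∀ n j, j ≤ n → α n / (m:ℝ) ≤ α (n - j) / m₁ + α j / m₂ := by
    intro n j hjn
    have hgrow : α n ≤ ((M:ℝ) + 1) * (α (n - j) + α j) := by
      rcases lt_or_eq_of_le hjn with h | h
      · have hh := hM j n h
        nlinarith [hα0 (n - j), hα0 j]
      · subst h
        have h0 : j - j = 0 := by omega
        rw [h0]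
        nlinarith [hα0 0, hα0 j]
    have hm12 : (0:ℝ) < (m₁:ℝ) * m₂ := by nlinarith
    have h1 : α n / (m:ℝ) ≤ (α (n - j) + α j) / ((m₁:ℝ) * m₂) := by
      rw [hmcast, div_le_div_iff₀ (by nlinarith) hm12]
      nlinarith [mul_le_mul_of_nonneg_right hgrow (le_of_lt hm12)]
    have h2 : (α (n - j) + α j) / ((m₁:ℝ) * m₂) ≤ α (n - j) / m₁ + α j / m₂ := by
      rw [add_div]
      apply add_le_add
      · rw [← div_div]
        exact div_le_self (div_nonneg (hα0 _) (by linarith)) hm2R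
      · rw [mul_comm, ← div_div]
        exact div_le_self (div_nonneg (hα0 _) (by linarith)) hm1R
    exact h1.trans h2
  have hterm : ∀ n j, j ≤ n →
      |θ (n - j)| * b j k ≤ C₀ * Real.exp (α l) * w j * finW α m n := by
    intro n j hjn
    have hwj := hwnn j
    by_cases hjl : j < l
    · have hwval : w j = b j k := by rw [hwdef]; dsimp only; rw [if_pos hjl]
      have hexp : Real.exp (-(α (n - j)) / m₁) ≤ Real.exp (α l) * Real.exp (-(α n) / m) := by
        rw [← Real.exp_add, Real.exp_le_exp]
        have hE' := hE n j hjn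
        have hjl' : α j / (m₂:ℝ) ≤ α l := by
          calc α j / (m₂:ℝ) ≤ α j := div_le_self (hα0 j) hm2R
            _ ≤ α l := hαm (le_of_lt hjl)
        rw [neg_div, neg_div]
        linarith
      calc |θ (n - j)| * b j k ≤ (C₀ * finW α m₁ (n - j)) * b j k :=
            mul_le_mul_of_nonneg_right (hθb (n - j)) (hb.nonneg j k)
        _ ≤ (C₀ * (Real.exp (α l) * Real.exp (-(α n) / m))) * b j k := by
            apply mul_le_mul_of_nonneg_right _ (hb.nonneg j k)
            exact mul_le_mul_of_nonneg_left hexp hC₀.le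
        _ = C₀ * Real.exp (α l) * w j * finW α m n := by
            rw [hwval]; unfold finW; ring
    · push_neg at hjl
      have hwval : w j = Cl * (b j k / b j l) := by
        rw [hwdef]; dsimp only; rw [if_neg (by omega)]
      rcases eq_or_lt_of_le (hb.nonneg j l) with hb0 | hb0
      · have hbk0 : b j k = 0 := by
          have h1 := b_mono_le hb j hkl.le
          have h2 := hb.nonneg j k
          linarith [hb0]
        rw [hbk0, mul_zero]
        exact mul_nonneg (mul_nonneg (mul_nonneg hC₀.le (Real.exp_pos _).le) hwj)
          (finW_pos α m n).le
      · have hbk : b j k ≤ (b j k / b j l) * (Cl * finW α m₂ j) := by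
          calc b j k = (b j k / b j l) * b j l := (div_mul_cancel₀ (b j k) hb0.ne').symm
            _ ≤ (b j k / b j l) * (Cl * finW α m₂ j) :=
                mul_le_mul_of_nonneg_left (hbl j hjl)
                  (div_nonneg (hb.nonneg j k) (hb.nonneg j l))
        have hexp2 : Real.exp (-(α (n - j)) / m₁) * Real.exp (-(α j) / m₂) ≤
            Real.exp (α l) * Real.exp (-(α n) / m) := by
          rw [← Real.exp_add, ← Real.exp_add, Real.exp_le_exp]
          have hE' := hE n j hjn
          have hl0 := hα0 l
          rw [neg_div, neg_div, neg_div]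
          linarith
        calc |θ (n - j)| * b j k
            ≤ (C₀ * finW α m₁ (n - j)) * ((b j k / b j l) * (Cl * finW α m₂ j)) :=
              mul_le_mul (hθb _) hbk (hb.nonneg j k)
                (mul_nonneg hC₀.le (finW_pos _ _ _).le)
          _ = (C₀ * Cl * (b j k / b j l)) *
              (Real.exp (-(α (n - j)) / m₁) * Real.exp (-(α j) / m₂)) := by
              unfold finW; ring
          _ ≤ (C₀ * Cl * (b j k / b j l)) * (Real.exp (α l) * Real.exp (-(α n) / m)) := by
              apply mul_le_mul_of_nonneg_left hexp2
              exact mul_nonneg (mul_nonneg hC₀.le hCl.le)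
                (div_nonneg (hb.nonneg j k) (hb.nonneg j l))
          _ = C₀ * Real.exp (α l) * w j * finW α m n := by
              rw [hwval]; unfold finW; ring
  set W : ℝ := ∑' j, w j with hWdef
  have hWnn : 0 ≤ W := tsum_nonneg hwnn
  refine ⟨C₀ * Real.exp (α l) * (W + 1), by positivity, fun n => ?_⟩
  have hsumw : ∑ j ∈ Finset.range (n + 1), w j ≤ W :=
    Summable.sum_le_tsum _ (fun j _ => hwnn j) hwsum
  calc gSum θ b k n
      ≤ ∑ j ∈ Finset.range (n + 1), C₀ * Real.exp (α l) * w j * finW α m n :=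
        Finset.sum_le_sum fun j hj => hterm n j (by
          have := Finset.mem_range.mp hj; omega)
    _ = C₀ * Real.exp (α l) * (∑ j ∈ Finset.range (n + 1), w j) * finW α m n := by
        rw [← Finset.sum_mul, ← Finset.mul_sum]
    _ ≤ C₀ * Real.exp (α l) * (W + 1) * finW α m n := by
        apply mul_le_mul_of_nonneg_right _ (finW_pos α m n).le
        apply mul_le_mul_of_nonneg_left _ (by positivity)
        linarith

end Aux

/-- Under the growth condition on `α` and nuclearity of `K(b)`,
`Ť_θ : Λ₁(α) → K(b)` is compact iff `θ ∈ (Λ₁(α))'` and there is `m` such that for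
every `k` there is `C > 0` with `b_{n,k} ≤ C e^{-α_n/m}` for all `n ≥ k`. -/
theorem stmt16 (α : ℕ → ℝ) (hα0 : ∀ n, 0 ≤ α n) (hαm : Monotone α)
    (hαi : Filter.Tendsto α Filter.atTop Filter.atTop)
    (M : ℕ) (hM : GrowthCond α M)
    (b : ℕ → ℕ → ℝ) (hb : IsKotheMatrix b) (hnb : IsNuclearKothe b)
    (θ : ℕ → ℝ) (hθ : θ 0 ≠ 0) :
    ((∀ x, memFin α x → InKothe b (checkT θ x)) ∧
      ∃ m, 0 < m ∧ ∀ k, ∃ C > 0, ∀ x, memFin α x →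
        kNorm b k (checkT θ x) ≤ C * finNorm α m x)
    ↔ ((∃ m, 0 < m ∧ ∃ C > 0, ∀ n, |θ n| ≤ C * finW α m n) ∧
       ∃ m, 0 < m ∧ ∀ k, ∃ C > 0, ∀ n, k ≤ n → b n k ≤ C * finW α m n) := by
  constructor
  · rintro ⟨_, m, hm, h2⟩
    constructor
    · obtain ⟨k₀, hk₀⟩ := hb.pos 0
      obtain ⟨C, hC, hK⟩ := h2 k₀
      refine ⟨m, hm, C / b 0 k₀, by positivity, fun n => ?_⟩
      have ht := term_le_kNorm (θ := θ) hb.nonneg (k := k₀) (n := n) (j := 0) (Nat.zero_le n)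
      have hk := hK (unitVec n) (memFin_unitVec α n)
      rw [finNorm_unitVec] at hk
      have h : |θ n| * b 0 k₀ ≤ C * finW α m n := by
        simpa using ht.trans hk
      rw [div_mul_eq_mul_div, le_div_iff₀ hk₀]
      linarith
    · refine ⟨m, hm, fun k => ?_⟩
      obtain ⟨C, hC, hK⟩ := h2 k
      have habs : 0 < |θ 0| := abs_pos.mpr hθ
      refine ⟨C / |θ 0|, by positivity, fun n _ => ?_⟩
      have ht := term_le_kNorm (θ := θ) hb.nonneg (k := k) (n := n) (j := n) le_rfl
      have hk := hK (unitVec n) (memFin_unitVec α n)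
      rw [finNorm_unitVec] at hk
      have h : |θ 0| * b n k ≤ C * finW α m n := by
        simpa using ht.trans hk
      rw [div_mul_eq_mul_div, le_div_iff₀ habs]
      linarith
  · rintro ⟨⟨m₁, hm₁, C₀, hC₀, hθb⟩, m₂, hm₂, hB⟩
    have key : ∀ k, ∃ C > 0, ∀ n, gSum θ b k n ≤ C * finW α ((M + 1) * m₁ * m₂) n := by
      intro k
      obtain ⟨l, hkl, hS⟩ := hnb k
      obtain ⟨Cl, hCl, hbl⟩ := hB l
      exact gSum_bound α hα0 hαm M hM b hb θ m₁ m₂ hm₁ hm₂ C₀ hC₀ hθb k l hkl hS Cl hCl hbl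
    have hmpos : 0 < (M + 1) * m₁ * m₂ := by positivity
    constructor
    · intro x hx k
      obtain ⟨C, _, hg⟩ := key k
      exact (back_main α b θ k _ hmpos C hb.nonneg hg x hx).1
    · refine ⟨(M + 1) * m₁ * m₂, hmpos, fun k => ?_⟩
      obtain ⟨C, hC, hg⟩ := key k
      exact ⟨C, hC, fun x hx => (back_main α b θ k _ hmpos C hb.nonneg hg x hx).2⟩
end
end
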